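/- For every n ≥ 90, the maximum number of edges of an n-vertex triangle-free simple graph with chromatic number at least 4 is exactly ⌊(n−3)²/4⌋ + 5. -/

import Mathlib

/-!
Let `v` be a vertex of maximum degree `Δ` of a triangle-free graph `G` with `χ(G) ≥ 4`. Its
neighbourhood `N` is independent, so `G - N` is not bipartite, and a shortest odd closed walk of
`G - N` is an induced cycle `C` of length `ℓ = 2k - 1 ≥ 5`. Counting edges inside `C`, between
`C` and `N` (no vertex sees two consecutive vertices of `C`), and at the remaining `n - Δ - ℓ`
vertices gives `e(G) ≤ ℓ + Δ (k - 1) + (n - Δ - ℓ) Δ`, which AM-GM turns into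
`⌊(n - k)² / 4⌋ + 2k - 1 ≤ ⌊(n - 3)² / 4⌋ + 5`. Equality is attained by the Grötzsch graph with
its apex and one shadow vertex replaced by two balanced classes of twins.
-/

open Finset

theorem Nat.mul_le_add_sq_div_four (a b : ℕ) : a * b ≤ (a + b) ^ 2 / 4 :=
  (Nat.le_div_iff_mul_le four_pos).2 (by nlinarith [two_mul_le_add_sq a b])

theorem Nat.div_two_mul_sub_div_two (N : ℕ) : N / 2 * (N - N / 2) = N ^ 2 / 4 := by
  rcases Nat.even_or_odd' N with ⟨t, rfl | rfl⟩
  · rw [show 2 * t / 2 = t by omega, show 2 * t - t = t by omega,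
      show (2 * t) ^ 2 = 4 * (t * t) by ring]
    omega
  · rw [show (2 * t + 1) / 2 = t by omega, show 2 * t + 1 - t = t + 1 by omega,
      show (2 * t + 1) ^ 2 = 4 * (t * (t + 1)) + 1 by ring]
    omega

theorem Nat.add_mul_div_two_add_sub_mul_le {ℓ Δ n : ℕ} (hℓ : 5 ≤ ℓ) (hodd : Odd ℓ) (hΔ : 1 ≤ Δ)
    (hn : Δ + ℓ ≤ n) : ℓ + Δ * (ℓ / 2) + (n - (Δ + ℓ)) * Δ ≤ (n - 3) ^ 2 / 4 + 5 := by
  obtain ⟨j, rfl⟩ : ∃ j, ℓ = 2 * j + 5 := ⟨ℓ / 2 - 2, by obtain ⟨k, rfl⟩ := hodd; omega⟩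
  obtain ⟨m, rfl⟩ := Nat.exists_eq_add_of_le hn
  rw [show (2 * j + 5) / 2 = j + 2 by omega,
    show Δ + (2 * j + 5) + m - (Δ + (2 * j + 5)) = m by omega,
    show Δ + (2 * j + 5) + m - 3 = Δ + (j + 2 + m) + j by omega]
  have hamgm := Nat.mul_le_add_sq_div_four Δ (j + 2 + m)
  have hsq : (Δ + (j + 2 + m)) ^ 2 + 4 * (2 * j) ≤ (Δ + (j + 2 + m) + j) ^ 2 := by
    nlinarith [Nat.mul_le_mul_right j (by omega : j + 3 ≤ Δ + (j + 2 + m)), Nat.le_mul_self j]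
  have hdiv := Nat.div_le_div_right (c := 4) hsq
  rw [Nat.add_mul_div_left _ _ four_pos] at hdiv
  nlinarith

namespace SimpleGraph

variable {V V' : Type*} {G : SimpleGraph V}

theorem cliqueFree_three_iff :
    G.CliqueFree 3 ↔ ∀ a b c, G.Adj a b → G.Adj a c → G.Adj b c → False := by
  classical
  refine ⟨fun h a b c hab hac hbc => h {a, b, c} (is3Clique_triple_iff.2 ⟨hab, hac, hbc⟩),
    fun h s hs => ?_⟩
  obtain ⟨a, b, c, hab, hac, hbc, rfl⟩ := is3Clique_iff.1 hs
  exact h a b c hab hac hbc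

theorem cliqueFree_of_hom {H : SimpleGraph V'} {n : ℕ} (f : G →g H) (h : H.CliqueFree n) :
    G.CliqueFree n := by
  rw [cliqueFree_iff] at h ⊢
  exact ⟨fun c => h.false ⟨f.comp c.toHom, Hom.injective_of_top_hom _⟩⟩

theorem add_one_le_chromaticNumber_iff {n : ℕ} :
    ((n + 1 : ℕ) : ℕ∞) ≤ G.chromaticNumber ↔ ¬ G.Colorable n := by
  rw [← chromaticNumber_le_iff_colorable, not_le, Nat.cast_add, Nat.cast_one,
    ENat.add_one_le_iff (ENat.natCast_ne_top n)]

theorem IsIndepSet.colorable_add_one {s : Set V} {n : ℕ} (hs : G.IsIndepSet s)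
    (h : (G.induce sᶜ).Colorable n) : G.Colorable (n + 1) := by
  classical
  obtain ⟨c⟩ := h
  refine ⟨Coloring.mk (fun x => if hx : x ∈ s then Fin.last n else (c ⟨x, hx⟩).castSucc) ?_⟩
  intro x y hxy
  by_cases hx : x ∈ s <;> by_cases hy : y ∈ s <;> simp only [hx, hy, dite_true, dite_false]
  · exact (hs hx hy hxy.ne hxy).elim
  · exact (Fin.castSucc_ne_last _).symm
  · exact Fin.castSucc_ne_last _
  · exact fun h => c.valid (v := ⟨x, hx⟩) (w := ⟨y, hy⟩) hxy (Fin.castSucc_injective _ h)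

section Comap

variable {W α ι : Type*} [Fintype α] [Fintype ι] (H : SimpleGraph W) [DecidableRel H.Adj]

theorem card_edgeFinset_comap_const (w : W) : #(H.comap fun _ : α => w).edgeFinset = 0 := by
  rw [Finset.card_eq_zero, edgeFinset_eq_empty]
  ext
  simp

theorem card_edgeFinset_comap_sumElim (f : α → W) (g : ι → W) :
    #(H.comap (Sum.elim f g)).edgeFinset =
      #(H.comap f).edgeFinset + #{p : α × ι | H.Adj (f p.1) (g p.2)} +
        #(H.comap g).edgeFinset := by
  have hl (a : α) : (H.comap (Sum.elim f g)).degree (.inl a) =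
      (H.comap f).degree a + ∑ i, if H.Adj (f a) (g i) then 1 else 0 := by
    simp only [← card_neighborFinset_eq_degree, neighborFinset_eq_filter, card_filter,
      Fintype.sum_sum_type]
    rfl
  have hr (i : ι) : (H.comap (Sum.elim f g)).degree (.inr i) =
      (∑ a, if H.Adj (f a) (g i) then 1 else 0) + (H.comap g).degree i := by
    simp only [← card_neighborFinset_eq_degree, neighborFinset_eq_filter, card_filter,
      Fintype.sum_sum_type]
    congr 1
    exact Finset.sum_congr rfl fun a _ => if_congr (H.adj_comm _ _) rfl rfl
  have hcross : #{p : α × ι | H.Adj (f p.1) (g p.2)} =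
      ∑ a, ∑ i, if H.Adj (f a) (g i) then 1 else 0 := by
    rw [card_filter, Fintype.sum_prod_type]
  have h := sum_degrees_eq_twice_card_edges (H.comap (Sum.elim f g))
  rw [Fintype.sum_sum_type] at h
  simp only [hl, hr, sum_add_distrib, sum_degrees_eq_twice_card_edges] at h
  rw [Finset.sum_comm (γ := ι)] at h
  omega

end Comap

section Mycielskian

/-- `inl x` is the copy of `x`, `inr (inl x)` its shadow, and `inr (inr ())` the apex. -/
def mycielskian (G : SimpleGraph V) : SimpleGraph (V ⊕ V ⊕ Unit) where
  Adj
    | .inl x, .inl y => G.Adj x y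
    | .inl x, .inr (.inl y) => G.Adj x y
    | .inr (.inl x), .inl y => G.Adj x y
    | .inr (.inl _), .inr (.inr _) => True
    | .inr (.inr _), .inr (.inl _) => True
    | _, _ => False
  symm := ⟨by rintro (x | x | _) (y | y | _) h <;> first | exact h.symm | trivial⟩
  loopless := ⟨by rintro (x | x | _) h <;> first | exact G.loopless.irrefl x h | exact h⟩

instance [DecidableRel G.Adj] : DecidableRel G.mycielskian.Adj := by
  rintro (x | x | _) (y | y | _) <;> dsimp only [mycielskian] <;> infer_instance

theorem CliqueFree.mycielskian (hG : G.CliqueFree 3) : G.mycielskian.CliqueFree 3 := by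
  rw [cliqueFree_three_iff] at hG ⊢
  rintro (a | a | _) (b | b | _) (c | c | _) hab hac hbc <;>
    first | exact hab | exact hac | exact hbc | exact hG a b c hab hac hbc

theorem not_colorable_mycielskian {n : ℕ} (hG : ¬ G.Colorable n) :
    ¬ G.mycielskian.Colorable (n + 1) := by
  classical
  rintro ⟨c⟩
  set w := c (.inr (.inr ()))
  have hshadow (x : V) : c (.inr (.inl x)) ≠ w := c.valid (v := .inr (.inl x)) trivial
  -- Recolouring every vertex of colour `w` by the colour of its shadow leaves `n` colours.
  let c' : G.Coloring {i : Fin (n + 1) // i ≠ w} := Coloring.mk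
    (fun x => if h : c (.inl x) = w then ⟨_, hshadow x⟩ else ⟨_, h⟩)
    (fun {x y} hxy => by
      by_cases hx : c (.inl x) = w <;> by_cases hy : c (.inl y) = w <;>
        simp only [hx, hy, dite_true, dite_false, ne_eq, Subtype.mk.injEq]
      · exact (c.valid (v := .inl x) (w := .inl y) hxy (hx.trans hy.symm)).elim
      · exact c.valid (v := .inr (.inl x)) (w := .inl y) hxy
      · exact c.valid (v := .inl x) (w := .inr (.inl y)) hxy
      · exact c.valid (v := .inl x) (w := .inl y) hxy)
  exact hG (by simpa using c'.colorable)

end Mycielskian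

section ClosedWalks

/-- A closed walk of length `ℓ`, encoded as an `ℓ`-periodic sequence of vertices. -/
def IsClosedWalk (G : SimpleGraph V) (f : ℕ → V) (ℓ : ℕ) : Prop :=
  (∀ i, G.Adj (f i) (f (i + 1))) ∧ Function.Periodic f ℓ

theorem IsClosedWalk.map {G' : SimpleGraph V'} {f : ℕ → V} {ℓ : ℕ} (hf : G.IsClosedWalk f ℓ)
    (φ : G →g G') : G'.IsClosedWalk (φ ∘ f) ℓ :=
  ⟨fun i => φ.map_adj (hf.1 i), fun i => congrArg φ (hf.2 i)⟩

theorem isClosedWalk_of_adj {f : ℕ → V} {a m : ℕ} (hm : 0 < m)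
    (hf : ∀ j, j + 1 < m → G.Adj (f (a + j)) (f (a + j + 1)))
    (hclose : G.Adj (f (a + (m - 1))) (f a)) :
    G.IsClosedWalk (fun i => f (a + i % m)) m := by
  refine ⟨fun i => ?_, fun i => by simp only [Nat.add_mod_right]⟩
  show G.Adj (f (a + i % m)) (f (a + (i + 1) % m))
  rw [← Nat.mod_add_mod i m 1]
  have hi := Nat.mod_lt i hm
  rcases (by omega : i % m + 1 < m ∨ i % m + 1 = m) with h | h
  · rw [Nat.mod_eq_of_lt h]
    exact hf _ h
  · rw [h, Nat.mod_self, show i % m = m - 1 by omega]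
    exact hclose

theorem exists_isClosedWalk_of_eq {f : ℕ → V} (hf : ∀ i, G.Adj (f i) (f (i + 1))) {a b : ℕ}
    (hab : a < b) (h : f a = f b) : ∃ g, G.IsClosedWalk g (b - a) := by
  refine ⟨_, isClosedWalk_of_adj (by omega) (fun j _ => hf (a + j)) ?_⟩
  have := hf (a + (b - a - 1))
  rwa [show a + (b - a - 1) + 1 = b by omega, ← h] at this

theorem exists_isClosedWalk_of_adj {f : ℕ → V} (hf : ∀ i, G.Adj (f i) (f (i + 1))) {a b : ℕ}
    (hab : a ≤ b) (h : G.Adj (f b) (f a)) : ∃ g, G.IsClosedWalk g (b - a + 1) :=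
  ⟨_, isClosedWalk_of_adj (by omega) (fun j _ => hf (a + j))
    (by rwa [Nat.add_sub_cancel, Nat.add_sub_cancel' hab])⟩

theorem exists_odd_isClosedWalk (h : ¬ G.Colorable 2) :
    ∃ ℓ, Odd ℓ ∧ ∃ f, G.IsClosedWalk f ℓ := by
  obtain ⟨u, w, hw⟩ : ∃ u, ∃ w : G.Walk u u, ¬ Even w.length := by
    simpa [two_colorable_iff_forall_loop_even] using h
  have hpos : 0 < w.length := Nat.pos_of_ne_zero fun h0 => hw (by simp [h0])
  refine ⟨w.length, Nat.not_even_iff_odd.1 hw, _,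
    isClosedWalk_of_adj (f := w.getVert) (a := 0) hpos (fun j hj => ?_) ?_⟩
  · simpa using w.adj_getVert_succ (by omega : j < w.length)
  · rw [Walk.getVert_zero]
    have := w.adj_getVert_succ (i := w.length - 1) (by omega)
    rwa [Nat.sub_add_cancel hpos, Walk.getVert_length, ← Nat.zero_add (_ - 1)] at this

namespace IsClosedWalk

variable {f : ℕ → V} {ℓ : ℕ}

theorem five_le_of_odd (hG : G.CliqueFree 3) (hf : G.IsClosedWalk f ℓ) (hodd : Odd ℓ) :
    5 ≤ ℓ := by
  have h1 : ℓ ≠ 1 := by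
    rintro rfl
    exact G.loopless.irrefl _ (hf.2.eq ▸ hf.1 0)
  have h3 : ℓ ≠ 3 := by
    rintro rfl
    exact cliqueFree_three_iff.1 hG (f 0) (f 1) (f 2) (hf.1 0) (hf.2.eq ▸ hf.1 2).symm (hf.1 1)
  obtain ⟨k, rfl⟩ := hodd
  omega

theorem two_mul_card_adj_le [DecidableRel G.Adj] (hG : G.CliqueFree 3)
    (hf : G.IsClosedWalk f ℓ) (u : V) : 2 * #{i ∈ range ℓ | G.Adj u (f i)} ≤ ℓ := by
  set S := {i ∈ range ℓ | G.Adj u (f i)}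
  have hinj : Set.InjOn (fun i => (i + 1) % ℓ) S := fun i hi j hj h =>
    Nat.ModEq.eq_of_lt_of_lt (Nat.ModEq.add_right_cancel' 1 h)
      (mem_range.1 (mem_filter.1 hi).1) (mem_range.1 (mem_filter.1 hj).1)
  have hdisj : Disjoint S (S.image fun i => (i + 1) % ℓ) := by
    rw [disjoint_right]
    intro x hx hxS
    obtain ⟨i, hi, rfl⟩ := mem_image.1 hx
    rw [mem_filter, hf.2.map_mod_nat] at hxS
    exact cliqueFree_three_iff.1 hG u (f i) (f (i + 1)) (mem_filter.1 hi).2 hxS.2 (hf.1 i)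
  have hsub : S ∪ S.image (fun i => (i + 1) % ℓ) ⊆ range ℓ := by
    refine union_subset (filter_subset _ _) fun x hx => ?_
    obtain ⟨i, hi, rfl⟩ := mem_image.1 hx
    exact mem_range.2 (Nat.mod_lt _ (Nat.zero_lt_of_lt (mem_range.1 (mem_filter.1 hi).1)))
  calc 2 * #S = #(S ∪ S.image fun i => (i + 1) % ℓ) := by
        rw [card_union_of_disjoint hdisj, card_image_of_injOn hinj]; ring
    _ ≤ ℓ := (card_le_card hsub).trans_eq (card_range ℓ)

end IsClosedWalk

def IsShortestOddClosedWalk (G : SimpleGraph V) (f : ℕ → V) (ℓ : ℕ) : Prop :=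
  G.IsClosedWalk f ℓ ∧ Odd ℓ ∧ ∀ g m, G.IsClosedWalk g m → Odd m → ℓ ≤ m

theorem exists_isShortestOddClosedWalk (h : ¬ G.Colorable 2) :
    ∃ f ℓ, G.IsShortestOddClosedWalk f ℓ := by
  classical
  have hex := exists_odd_isClosedWalk h
  obtain ⟨hodd, f, hf⟩ := Nat.find_spec hex
  exact ⟨f, _, hf, hodd, fun g m hg hm => Nat.find_min' hex ⟨hm, g, hg⟩⟩

namespace IsShortestOddClosedWalk

variable {f : ℕ → V} {ℓ : ℕ}

theorem le_or_le (hf : G.IsShortestOddClosedWalk f ℓ) {m₁ m₂ : ℕ}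
    (h₁ : ∃ g, G.IsClosedWalk g m₁) (h₂ : ∃ g, G.IsClosedWalk g m₂) (hodd : Odd (m₁ + m₂)) :
    ℓ ≤ m₁ ∨ ℓ ≤ m₂ := by
  obtain ⟨g₁, hg₁⟩ := h₁
  obtain ⟨g₂, hg₂⟩ := h₂
  rcases Nat.even_or_odd m₁ with h | h
  · exact .inr (hf.2.2 g₂ m₂ hg₂ ((Nat.odd_add'.1 hodd).2 h))
  · exact .inl (hf.2.2 g₁ m₁ hg₁ h)

theorem injOn (hf : G.IsShortestOddClosedWalk f ℓ) : Set.InjOn f (Set.Iio ℓ) := by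
  have key : ∀ a b, a < b → b < ℓ → f a ≠ f b := by
    intro a b hab hb h
    have hwrap : f b = f (a + ℓ) := h.symm.trans (hf.1.2 a).symm
    rcases hf.le_or_le (exists_isClosedWalk_of_eq hf.1.1 hab h)
      (exists_isClosedWalk_of_eq hf.1.1 (by omega : b < a + ℓ) hwrap)
      (by convert hf.2.1 using 1; omega) with h | h <;> omega
  intro a ha b hb h
  rcases lt_trichotomy a b with hab | rfl | hab
  · exact (key a b hab hb h).elim
  · rfl
  · exact (key b a hab ha h.symm).elim

theorem chordless (hf : G.IsShortestOddClosedWalk f ℓ) {i j : ℕ} (h : G.Adj (f i) (f j)) :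
    ∃ k < ℓ, s(f i, f j) = s(f k, f (k + 1)) := by
  have hℓ : 0 < ℓ := hf.2.1.pos
  have key : ∀ a b, a < b → b < ℓ → G.Adj (f a) (f b) →
      ∃ k < ℓ, s(f a, f b) = s(f k, f (k + 1)) := by
    intro a b hab hb hadj
    have hwrap : G.Adj (f (a + ℓ)) (f b) := by rwa [hf.1.2 a]
    rcases hf.le_or_le (exists_isClosedWalk_of_adj hf.1.1 hab.le hadj.symm)
      (exists_isClosedWalk_of_adj hf.1.1 (by omega : b ≤ a + ℓ) hwrap)
      (by convert hf.2.1.add_even even_two using 1; omega) with h | h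
    · refine ⟨ℓ - 1, by omega, ?_⟩
      rw [Nat.sub_add_cancel hℓ, hf.1.2.eq, show a = 0 by omega, show b = ℓ - 1 by omega]
      exact Sym2.eq_swap
    · exact ⟨a, by omega, by rw [show b = a + 1 by omega]⟩
  rw [← hf.1.2.map_mod_nat i, ← hf.1.2.map_mod_nat j] at h ⊢
  have hi := Nat.mod_lt i hℓ
  have hj := Nat.mod_lt j hℓ
  rcases lt_trichotomy (i % ℓ) (j % ℓ) with hij | hij | hij
  · exact key _ _ hij hj h
  · exact (G.loopless.irrefl _ (hij ▸ h)).elim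
  · rw [Sym2.eq_swap]
    exact key _ _ hij hi h.symm

end IsShortestOddClosedWalk

structure IsInducedCycle (G : SimpleGraph V) (f : ℕ → V) (ℓ : ℕ) : Prop where
  isClosedWalk : G.IsClosedWalk f ℓ
  injOn : Set.InjOn f (Set.Iio ℓ)
  chordless : ∀ i j, G.Adj (f i) (f j) → ∃ k < ℓ, s(f i, f j) = s(f k, f (k + 1))

theorem IsShortestOddClosedWalk.isInducedCycle {f : ℕ → V} {ℓ : ℕ}
    (hf : G.IsShortestOddClosedWalk f ℓ) : G.IsInducedCycle f ℓ :=
  ⟨hf.1, hf.injOn, fun _ _ => hf.chordless⟩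

theorem IsInducedCycle.map {G' : SimpleGraph V'} {f : ℕ → V'} {ℓ : ℕ}
    (hf : G'.IsInducedCycle f ℓ) (φ : G' ↪g G) : G.IsInducedCycle (φ ∘ f) ℓ where
  isClosedWalk := hf.isClosedWalk.map φ.toHom
  injOn := φ.injective.comp_injOn hf.injOn
  chordless i j h := by
    obtain ⟨k, hk, hk'⟩ := hf.chordless i j (φ.map_adj_iff.1 h)
    exact ⟨k, hk, by simpa using congrArg (Sym2.map φ) hk'⟩

theorem IsInducedCycle.card_image_range [DecidableEq V] {f : ℕ → V} {ℓ : ℕ}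
    (hf : G.IsInducedCycle f ℓ) : #((range ℓ).image f) = ℓ := by
  rw [card_image_of_injOn (by simpa using hf.injOn), card_range]

end ClosedWalks

section UpperBound

variable [Fintype V] [DecidableEq V] [DecidableRel G.Adj]

theorem card_edgeFinset_le_of_isIndepSet {N C : Finset V} {E : Finset (Sym2 V)}
    (hN : G.IsIndepSet N) (hC : ∀ x ∈ C, ∀ y ∈ C, G.Adj x y → s(x, y) ∈ E) :
    #G.edgeFinset ≤ #E + ∑ u ∈ N, #{x ∈ C | G.Adj u x} + ∑ x ∈ (N ∪ C)ᶜ, G.degree x := by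
  have hsub : G.edgeFinset ⊆ E ∪ N.biUnion (fun u => {x ∈ C | G.Adj u x}.image (s(u, ·))) ∪
      (N ∪ C)ᶜ.biUnion (fun x => G.incidenceFinset x) := by
    intro e he
    induction e using Sym2.ind with
    | _ x y => ?_
    rw [mem_edgeFinset, mem_edgeSet] at he
    simp only [mem_union, mem_biUnion, mem_image, mem_filter, mem_incidenceFinset,
      mk'_mem_incidenceSet_iff]
    by_cases hx : x ∈ (N ∪ C)ᶜ
    · exact .inr ⟨x, hx, he, .inl rfl⟩
    by_cases hy : y ∈ (N ∪ C)ᶜ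
    · exact .inr ⟨y, hy, he, .inr rfl⟩
    simp only [mem_compl, not_not, mem_union] at hx hy
    rcases hx with hx | hx <;> rcases hy with hy | hy
    · exact (hN hx hy he.ne he).elim
    · exact .inl (.inr ⟨x, hx, y, ⟨hy, he⟩, rfl⟩)
    · exact .inl (.inr ⟨y, hy, x, ⟨hx, he.symm⟩, Sym2.eq_swap⟩)
    · exact .inl (.inl (hC x hx y hy he))
  refine (card_le_card hsub).trans <| (card_union_le _ _).trans <|
    add_le_add ((card_union_le _ _).trans (add_le_add le_rfl ?_)) ?_
  · exact card_biUnion_le.trans (sum_le_sum fun u _ => card_image_le)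
  · exact card_biUnion_le.trans_eq (sum_congr rfl fun x _ => G.card_incidenceFinset_eq_degree x)

theorem IsInducedCycle.card_edgeFinset_le (hG : G.CliqueFree 3) {N : Finset V}
    (hN : G.IsIndepSet N) {f : ℕ → V} {ℓ : ℕ} (hf : G.IsInducedCycle f ℓ) (hfN : ∀ i, f i ∉ N) :
    #G.edgeFinset ≤ ℓ + #N * (ℓ / 2) + (Fintype.card V - (#N + ℓ)) * G.maxDegree := by
  set C := (range ℓ).image f
  have hNC : Disjoint N C := disjoint_right.2 fun x hx => by
    obtain ⟨i, -, rfl⟩ := mem_image.1 hx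
    exact hfN i
  have hE : ∀ x ∈ C, ∀ y ∈ C, G.Adj x y →
      s(x, y) ∈ (range ℓ).image fun k => s(f k, f (k + 1)) := by
    intro x hx y hy hxy
    obtain ⟨i, -, rfl⟩ := mem_image.1 hx
    obtain ⟨j, -, rfl⟩ := mem_image.1 hy
    obtain ⟨k, hk, h⟩ := hf.chordless i j hxy
    exact mem_image.2 ⟨k, mem_range.2 hk, h.symm⟩
  have hNC_adj (u : V) : #{x ∈ C | G.Adj u x} ≤ ℓ / 2 := by
    rw [Nat.le_div_iff_mul_le two_pos, mul_comm, filter_image]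
    exact (Nat.mul_le_mul_left 2 card_image_le).trans
      (hf.isClosedWalk.two_mul_card_adj_le hG u)
  have hcompl : #(N ∪ C)ᶜ = Fintype.card V - (#N + ℓ) := by
    rw [card_compl, card_union_of_disjoint hNC, hf.card_image_range]
  calc #G.edgeFinset
      ≤ #((range ℓ).image fun k => s(f k, f (k + 1))) + ∑ u ∈ N, #{x ∈ C | G.Adj u x}
          + ∑ x ∈ (N ∪ C)ᶜ, G.degree x := card_edgeFinset_le_of_isIndepSet hN hE
    _ ≤ ℓ + ∑ _u ∈ N, ℓ / 2 + ∑ _x ∈ (N ∪ C)ᶜ, G.maxDegree := by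
        gcongr with u _ x _
        · exact card_image_le.trans_eq (card_range ℓ)
        · exact hNC_adj u
        · exact G.degree_le_maxDegree x
    _ = ℓ + #N * (ℓ / 2) + (Fintype.card V - (#N + ℓ)) * G.maxDegree := by
        rw [sum_const, sum_const, hcompl, smul_eq_mul, smul_eq_mul]

theorem card_edgeFinset_le_of_not_colorable_three (hG : G.CliqueFree 3)
    (hχ : ¬ G.Colorable 3) : #G.edgeFinset ≤ (Fintype.card V - 3) ^ 2 / 4 + 5 := by
  have : Nonempty V := not_isEmpty_iff.1 fun _ => hχ (.of_isEmpty 3)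
  obtain ⟨v, hv⟩ := G.exists_maximal_degree_vertex
  set N := G.neighborFinset v
  have hN : G.IsIndepSet N := by
    rw [coe_neighborFinset]
    exact isIndepSet_neighborSet_of_triangleFree G hG v
  obtain ⟨f, ℓ, hf⟩ := exists_isShortestOddClosedWalk fun h => hχ (hN.colorable_add_one h)
  have hc : G.IsInducedCycle (fun i => f i) ℓ := hf.isInducedCycle.map (Embedding.induce _)
  have hcN (i : ℕ) : (f i : V) ∉ N := (f i).2
  have hΔ : 1 ≤ G.maxDegree := ((G.degree_pos_iff_exists_adj _).2
    ⟨_, hc.isClosedWalk.1 0⟩).trans_le (G.degree_le_maxDegree _)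
  have hNℓ : #N + ℓ ≤ Fintype.card V := by
    rw [← hc.card_image_range, ← card_union_of_disjoint (disjoint_right.2 fun x hx => by
      obtain ⟨i, -, rfl⟩ := mem_image.1 hx
      exact hcN i)]
    exact card_le_univ _
  have hNΔ : #N = G.maxDegree := hv.symm
  calc #G.edgeFinset ≤ ℓ + #N * (ℓ / 2) + (Fintype.card V - (#N + ℓ)) * G.maxDegree :=
        hc.card_edgeFinset_le hG hN hcN
    _ ≤ _ := by
        rw [hNΔ] at hNℓ ⊢
        exact Nat.add_mul_div_two_add_sub_mul_le (hc.isClosedWalk.five_le_of_odd hG hf.2.1)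
          hf.2.1 hΔ hNℓ

end UpperBound

section LowerBound

abbrev grotzsch : SimpleGraph (Fin 5 ⊕ Fin 5 ⊕ Unit) := (cycleGraph 5).mycielskian

theorem grotzsch_cliqueFree : grotzsch.CliqueFree 3 :=
  CliqueFree.mycielskian (cliqueFree_three_iff.2 (by decide))

theorem not_colorable_grotzsch : ¬ grotzsch.Colorable 3 := by
  refine not_colorable_mycielskian fun h => ?_
  have := h.chromaticNumber_le
  rw [chromaticNumber_cycleGraph_of_odd 5 (by norm_num) (by decide)] at this
  norm_num at this

abbrev grotzschBlowup (p q : ℕ) : SimpleGraph ((Fin 5 ⊕ Fin 5 ⊕ Unit) ⊕ (Fin p ⊕ Fin q)) :=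
  grotzsch.comap (Sum.elim id (Sum.elim (fun _ => .inr (.inr ())) (fun _ => .inr (.inl 0))))

theorem card_edgeFinset_grotzschBlowup (p q : ℕ) :
    #(grotzschBlowup p q).edgeFinset = (p + 3) * (q + 5) + 5 := by
  have hG : #(grotzsch.comap id).edgeFinset = 20 := by decide
  have hapex : ∑ w, (if grotzsch.Adj w (.inr (.inr ())) then 1 else 0) = 5 := by decide
  have hshadow : ∑ w, (if grotzsch.Adj w (.inr (.inl 0)) then 1 else 0) = 3 := by decide
  rw [card_edgeFinset_comap_sumElim, card_edgeFinset_comap_sumElim,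
    card_edgeFinset_comap_const, card_edgeFinset_comap_const, hG]
  have hcross : #{x : (Fin 5 ⊕ Fin 5 ⊕ Unit) × (Fin p ⊕ Fin q) |
      grotzsch.Adj (id x.1) (Sum.elim (fun _ => .inr (.inr ())) (fun _ => .inr (.inl 0)) x.2)} =
      5 * p + 3 * q := by
    rw [card_filter, Fintype.sum_prod_type, Finset.sum_comm, Fintype.sum_sum_type]
    calc _ = ∑ _i : Fin p, 5 + ∑ _j : Fin q, 3 :=
          congrArg₂ (· + ·) (sum_congr rfl fun _ _ => hapex) (sum_congr rfl fun _ _ => hshadow)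
      _ = 5 * p + 3 * q := by simp [mul_comm]
  have htwins : #{x : Fin p × Fin q | grotzsch.Adj (.inr (.inr ())) (.inr (.inl 0))} = p * q := by
    rw [filter_true_of_mem fun _ _ => by exact trivial]
    simp
  rw [hcross, htwins]
  ring

theorem exists_cliqueFree_three_not_colorable_three {n : ℕ} (hn : 13 ≤ n) :
    ∃ G : SimpleGraph (Fin n), G.CliqueFree 3 ∧ ¬ G.Colorable 3 ∧
      G.edgeSet.ncard = (n - 3) ^ 2 / 4 + 5 := by
  set p := (n - 3) / 2 - 3
  set q := (n - 3) - (n - 3) / 2 - 5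
  have hcard : Fintype.card (Fin n) =
      Fintype.card ((Fin 5 ⊕ Fin 5 ⊕ Unit) ⊕ (Fin p ⊕ Fin q)) := by
    simp only [Fintype.card_sum, Fintype.card_fin, Fintype.card_unit]
    omega
  let φ := Iso.comap (Fintype.equivOfCardEq hcard) (grotzschBlowup p q)
  refine ⟨_, cliqueFree_of_hom φ.toHom (cliqueFree_of_hom (Hom.comap _ _) grotzsch_cliqueFree),
    fun h => not_colorable_grotzsch ((h.of_hom φ.symm.toHom).of_hom ⟨Sum.inl, id⟩), ?_⟩
  rw [← Nat.card_coe_set_eq, Nat.card_congr φ.mapEdgeSet, Nat.card_coe_set_eq,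
    ← coe_edgeFinset, Set.ncard_coe_finset, card_edgeFinset_grotzschBlowup,
    ← Nat.div_two_mul_sub_div_two]
  congr 2 <;> omega

end LowerBound

end SimpleGraph

open SimpleGraph in
theorem stmt_1 (n : ℕ) (hn : 90 ≤ n) :
    IsGreatest {m : ℕ | ∃ G : SimpleGraph (Fin n),
        G.CliqueFree 3 ∧ 4 ≤ G.chromaticNumber ∧ G.edgeSet.ncard = m}
      ((n - 3) ^ 2 / 4 + 5) := by
  classical
  refine ⟨?_, ?_⟩
  · obtain ⟨G, hG, hχ, hcard⟩ := exists_cliqueFree_three_not_colorable_three (by omega : 13 ≤ n)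
    exact ⟨G, hG, add_one_le_chromaticNumber_iff.2 hχ, hcard⟩
  · rintro _ ⟨G, hG, hχ, rfl⟩
    rw [← coe_edgeFinset, Set.ncard_coe_finset]
    simpa using card_edgeFinset_le_of_not_colorable_three hG (add_one_le_chromaticNumber_iff.1 hχ)
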